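/- Let X be a rack, A = (A,φ,ψ) an X-module, and σ = {σ_{x,y} ∈ A_{x^y}} a family of elements satisfying the cocycle condition σ_{x^y,z} + φ_{x^y,z}(σ_{x,y}) = φ_{x^z,y^z}(σ_{x,z}) + σ_{x^z,y^z} + ψ_{y^z,x^z}(σ_{y,z}) for all x,y,z. Then the set E[A,σ] = {(a,x) : a ∈ A_x} with operation (a,x)^(b,y) = (φ_{x,y}(a) + σ_{x,y} + ψ_{y,x}(b), x^y) is a rack. -/
import Mathlib


/-- A rack: a set with an operation `act a b` ("a^b") such that right
translation by each element is uniquely invertible (R1) and the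
self-distributivity law (R2) holds. -/
structure RackStr (X : Type*) where
  act : X → X → X
  uniq : ∀ a b : X, ∃! c : X, act c b = a
  dist : ∀ a b c : X, act (act a b) c = act (act a c) (act b c)

/-- A rack module over `(X, r)`: abelian groups `A x`, isomorphisms
`phi x y : A x ≃+ A (x^y)` and homomorphisms `psi y x : A y →+ A (x^y)`
satisfying the rack-module axioms. -/
structure RackMod {X : Type*} (r : RackStr X) (A : X → Type*)
    [∀ x, AddCommGroup (A x)] where
  phi : ∀ x y : X, A x ≃+ A (r.act x y)
  psi : ∀ y x : X, A y →+ A (r.act x y)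
  phi_phi : ∀ (x y z : X) (a : A x),
    cast (congrArg A (r.dist x y z)) (phi (r.act x y) z (phi x y a))
      = phi (r.act x z) (r.act y z) (phi x z a)
  phi_psi : ∀ (x y z : X) (b : A y),
    cast (congrArg A (r.dist x y z)) (phi (r.act x y) z (psi y x b))
      = psi (r.act y z) (r.act x z) (phi y z b)
  psi_psi : ∀ (x y z : X) (c : A z),
    cast (congrArg A (r.dist x y z)) (psi z (r.act x y) c)
      = phi (r.act x z) (r.act y z) (psi z x c)
        + psi (r.act y z) (r.act x z) (psi z y c)

/-- The semidirect product operation on `{(a,x) : a ∈ A x}`: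
`(a,x)^(b,y) = (φ_{x,y}(a) + ψ_{y,x}(b), x^y)`. -/
@[reducible] def sdOp {X : Type*} {r : RackStr X} {A : X → Type*} [∀ x, AddCommGroup (A x)]
    (m : RackMod r A) (p q : Σ x, A x) : Σ x, A x :=
  ⟨r.act p.1 q.1, m.phi p.1 q.1 p.2 + m.psi q.1 p.1 q.2⟩

/-- The rack 2-cocycle condition for a family `σ x y ∈ A (x^y)`. -/
@[reducible] def IsCocycle {X : Type*} {r : RackStr X} {A : X → Type*}
    [∀ x, AddCommGroup (A x)] (m : RackMod r A)
    (σ : ∀ x y : X, A (r.act x y)) : Prop :=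
  ∀ x y z : X,
    cast (congrArg A (r.dist x y z))
        (σ (r.act x y) z + m.phi (r.act x y) z (σ x y))
      = m.phi (r.act x z) (r.act y z) (σ x z) + σ (r.act x z) (r.act y z)
        + m.psi (r.act y z) (r.act x z) (σ y z)

/-- The operation of the extension `E[A,σ]`:
`(a,x)^(b,y) = (φ_{x,y}(a) + σ_{x,y} + ψ_{y,x}(b), x^y)`. -/
@[reducible] def extOp {X : Type*} {r : RackStr X} {A : X → Type*} [∀ x, AddCommGroup (A x)]
    (m : RackMod r A) (σ : ∀ x y : X, A (r.act x y))
    (p q : Σ x, A x) : Σ x, A x :=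
  ⟨r.act p.1 q.1, m.phi p.1 q.1 p.2 + σ p.1 q.1 + m.psi q.1 p.1 q.2⟩


private lemma castAdd {X : Type*} {A : X → Type*} [∀ x, AddCommGroup (A x)]
    {x y : X} (h : x = y) (u v : A x) :
    cast (congrArg A h) (u + v) = cast (congrArg A h) u + cast (congrArg A h) v := by
  subst h; rfl

/-- If `σ` satisfies the cocycle condition, then `E[A,σ]` with operation
`(a,x)^(b,y) = (φ_{x,y}(a) + σ_{x,y} + ψ_{y,x}(b), x^y)` is a rack. -/
theorem extOp_is_rack {X : Type*} {r : RackStr X} {A : X → Type*}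
    [∀ x, AddCommGroup (A x)] (m : RackMod r A)
    (σ : ∀ x y : X, A (r.act x y)) (hσ : IsCocycle m σ) :
    (∀ p q : Σ x, A x, ∃! c : Σ x, A x, extOp m σ c q = p) ∧
    (∀ p q s' : Σ x, A x,
      extOp m σ (extOp m σ p q) s'
        = extOp m σ (extOp m σ p s') (extOp m σ q s')) := by
  constructor
  · rintro ⟨px, pa⟩ ⟨qx, qa⟩
    obtain ⟨x, hx, hxu⟩ := r.uniq px qx
    subst hx
    refine ⟨⟨x, (m.phi x qx).symm (pa - σ x qx - m.psi qx x qa)⟩, ?_, ?_⟩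
    · show (⟨r.act x qx, _⟩ : Σ x, A x) = _
      congr 1
      rw [AddEquiv.apply_symm_apply]
      abel
    · rintro ⟨x', a'⟩ h
      have h1 : r.act x' qx = r.act x qx := congrArg Sigma.fst h
      have hx' := hxu x' h1
      subst hx'
      have h2 : m.phi x' qx a' + σ x' qx + m.psi qx x' qa = pa :=
        eq_of_heq (Sigma.mk.inj_iff.mp h).2
      congr 1
      rw [AddEquiv.eq_symm_apply, ← h2]
      abel
  · rintro ⟨x, a⟩ ⟨y, b⟩ ⟨z, c⟩
    have hc := hσ x y z
    rw [castAdd] at hc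
    have hc2 : cast (congrArg A (r.dist x y z)) (σ (r.act x y) z)
        = m.phi (r.act x z) (r.act y z) (σ x z) + σ (r.act x z) (r.act y z)
          + m.psi (r.act y z) (r.act x z) (σ y z)
          - cast (congrArg A (r.dist x y z)) (m.phi (r.act x y) z (σ x y)) := by
      rw [← hc]; exact (add_sub_cancel_right _ _).symm
    refine Sigma.ext (r.dist x y z) (heq_of_cast_eq (congrArg A (r.dist x y z)) ?_)
    show cast (congrArg A (r.dist x y z)) _ = _
    simp only [map_add]
    rw [castAdd, castAdd, castAdd, castAdd, m.phi_phi, m.phi_psi, m.psi_psi, hc2]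
    · abel
    all_goals exact r.dist x y z
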